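/- Let P be a convex d-polytope in ℝ^d with the origin o in its interior, and let P° be its polar. Let F be a k-face of P (0 ≤ k ≤ d−1) and F* the corresponding (d−k−1)-face of P°. Then F contains a nondegenerate equilibrium point of P with respect to o if and only if F* contains a nondegenerate equilibrium point of P° with respect to o. -/

import Mathlib

open scoped RealInnerProductSpace

noncomputable section

abbrev En (d : ℕ) := EuclideanSpace ℝ (Fin d)

/-- The polar of a set `s`: all `y` with `⟪x, y⟫ ≤ 1` for every `x ∈ s`. -/
def polarSet {d : ℕ} (s : Set (En d)) : Set (En d) := {y | ∀ x ∈ s, ⟪x, y⟫ ≤ 1}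

/-- The dimension of a subset of `ℝ^d` (the dimension of its affine hull). -/
def faceDimD {d : ℕ} (F : Set (En d)) : ℕ := Module.finrank ℝ (vectorSpan ℝ F)

/-- The set of (nonempty, exposed) `k`-dimensional faces of `P`. -/
def kFacesD {d : ℕ} (P : Set (En d)) (k : ℕ) : Set (Set (En d)) :=
  {F | IsExposed ℝ P F ∧ F.Nonempty ∧ faceDimD F = k}

/-- The face of the polar polytope corresponding to the face `F` of `P`. -/
def dualFace {d : ℕ} (P F : Set (En d)) : Set (En d) :=
  {y ∈ polarSet P | ∀ x ∈ F, ⟪x, y⟫ = 1}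

/-- The face `F` of `P` contains a nondegenerate equilibrium point with respect to the
origin: there is `q` in the relative interior of `F` such that the hyperplane through
`q` orthogonal to `q` supports `P` and meets `P` exactly in `F`. -/
def HasNondegEquil {d : ℕ} (P F : Set (En d)) : Prop :=
  ∃ q ∈ intrinsicInterior ℝ F,
    (∀ x ∈ P, ⟪x, q⟫ ≤ ⟪q, q⟫) ∧ {x ∈ P | ⟪x, q⟫ = ⟪q, q⟫} = F
/-! If `q` is a nondegenerate equilibrium point of `P` in `F`, then its inverse `q / ‖q‖²` in the
unit sphere is one of `P°` in `F*`. The hyperplane `⟪x, q⟫ = ‖q‖²` supporting `P` along `F`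
translates into the constraint `⟪q, y⟫ ≤ 1` of `P°`, attained exactly on `F*` because a linear
functional that is maximal at a relative interior point of `F` is constant on `F`. The inverse lies
in the relative interior of `F*` since `P` is the hull of finitely many vertices, and near it only
the constraints `⟪v, y⟫ ≤ 1` of the vertices `v ∈ F` are active. The converse is the same argument
for `P°`, which is again a polytope (an extreme point of `P°` is determined by its set of active
vertex constraints), together with `P°° = P` and `F** = F`. -/

open Filter Topology

theorem mem_intrinsicInterior_of_isOpen_of_inter_subset {𝕜 V P : Type*} [Ring 𝕜]
    [AddCommGroup V] [Module 𝕜 V] [TopologicalSpace P] [AddTorsor V P]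
    {s U : Set P} {A : AffineSubspace 𝕜 P} {x : P} (hsA : s ⊆ A) (hU : IsOpen U)
    (hxU : x ∈ U) (hxs : x ∈ s) (hUA : U ∩ A ⊆ s) :
    x ∈ intrinsicInterior 𝕜 s := by
  have hspan : affineSpan 𝕜 s ≤ A := affineSpan_le.2 hsA
  refine mem_intrinsicInterior.2 ⟨⟨x, subset_affineSpan 𝕜 s hxs⟩, ?_, rfl⟩
  have hUs : ((↑) ⁻¹' U : Set (affineSpan 𝕜 s)) ⊆ (↑) ⁻¹' s :=
    fun z hz => hUA ⟨hz, hspan z.2⟩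
  exact interior_maximal hUs (hU.preimage continuous_subtype_val) hxU

theorem eventually_add_smul_sub_mem_of_mem_intrinsicInterior {E : Type*}
    [NormedAddCommGroup E] [NormedSpace ℝ E] {s : Set E} {x y : E}
    (hx : x ∈ intrinsicInterior ℝ s) (hy : y ∈ s) :
    ∀ᶠ t in 𝓝 (0 : ℝ), x + t • (x - y) ∈ s := by
  obtain ⟨⟨x, hxA⟩, hxint, rfl⟩ := mem_intrinsicInterior.1 hx
  have hline : ∀ t : ℝ, x + t • (x - y) ∈ affineSpan ℝ s := fun t => by
    simpa [add_comm] using AffineSubspace.smul_vsub_vadd_mem _ t hxA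
      (subset_affineSpan ℝ s hy) hxA
  let γ : ℝ → affineSpan ℝ s := fun t => ⟨x + t • (x - y), hline t⟩
  have hγ : Continuous γ := by fun_prop
  have h0 : γ 0 = ⟨x, hxA⟩ := Subtype.ext (by simp [γ])
  filter_upwards [hγ.continuousAt.preimage_mem_nhds (isOpen_interior.mem_nhds (h0 ▸ hxint))]
    with t ht using (interior_subset ht : γ t ∈ (↑) ⁻¹' s)

theorem inner_eq_of_mem_intrinsicInterior {E : Type*} [NormedAddCommGroup E]
    [InnerProductSpace ℝ E] {s : Set E} {q y x : E} {c : ℝ}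
    (hq : q ∈ intrinsicInterior ℝ s) (hle : ∀ z ∈ s, ⟪z, y⟫ ≤ c) (hqy : ⟪q, y⟫ = c)
    (hx : x ∈ s) : ⟪x, y⟫ = c := by
  obtain ⟨t, ht, hts⟩ :=
    (eventually_add_smul_sub_mem_of_mem_intrinsicInterior hq hx).exists_gt
  have := hle _ hts
  rw [inner_add_left, real_inner_smul_left, inner_sub_left, hqy] at this
  nlinarith [hle x hx]

theorem faceDimD_eq_of_interior_nonempty {d : ℕ} {P : Set (En d)}
    (h : (interior P).Nonempty) : faceDimD P = d := by
  rw [faceDimD, ← direction_affineSpan,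
    affineSpan_eq_top_of_nonempty_interior (h.mono (interior_mono (subset_convexHull ℝ P))),
    AffineSubspace.direction_top, finrank_top, finrank_euclideanSpace_fin]

section Polar

variable {d : ℕ}

theorem polarSet_eq_biInter (s : Set (En d)) :
    polarSet s = ⋂ x ∈ s, {y | ⟪x, y⟫ ≤ 1} := by
  ext y; simp [polarSet]

theorem isClosed_polarSet (s : Set (En d)) : IsClosed (polarSet s) := by
  rw [polarSet_eq_biInter]
  exact isClosed_biInter fun x _ => isClosed_le (by fun_prop) continuous_const

theorem convex_polarSet (s : Set (En d)) : Convex ℝ (polarSet s) := by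
  rw [polarSet_eq_biInter]
  exact convex_iInter₂ fun x _ => convex_halfSpace_le (innerₛₗ ℝ x).isLinear 1

theorem zero_mem_polarSet (s : Set (En d)) : (0 : En d) ∈ polarSet s := fun x _ => by
  simp

theorem polarSet_convexHull (s : Set (En d)) : polarSet (convexHull ℝ s) = polarSet s := by
  refine Set.Subset.antisymm (fun y hy x hx => hy x (subset_convexHull ℝ s hx))
    fun y hy => ?_
  have hhalf : Convex ℝ {x : En d | ⟪x, y⟫ ≤ 1} := by
    simp_rw [real_inner_comm y]
    exact convex_halfSpace_le (innerₛₗ ℝ y).isLinear 1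
  exact convexHull_min hy hhalf

theorem inv_smul_mem_polarSet {s : Set (En d)} {w : En d} {c : ℝ} (hc : 0 < c)
    (hw : ∀ x ∈ s, ⟪x, w⟫ ≤ c) : c⁻¹ • w ∈ polarSet s := fun x hx => by
  rw [real_inner_smul_right]
  exact (inv_mul_le_one₀ hc).2 (hw x hx)

theorem isCompact_polarSet {P : Set (En d)} (hint : (0 : En d) ∈ interior P) :
    IsCompact (polarSet P) := by
  obtain ⟨r, hr, hball⟩ := Metric.mem_nhds_iff.1 (mem_interior_iff_mem_nhds.1 hint)
  have hnorm : ∀ y ∈ polarSet P, ‖y‖ ≤ 2 / r := by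
    intro y hy
    rcases eq_or_ne y 0 with rfl | hy0
    · rw [norm_zero]; positivity
    have hny : 0 < ‖y‖ := norm_pos_iff.2 hy0
    have hmem : (r / 2 / ‖y‖) • y ∈ P := hball <| by
      rw [mem_ball_zero_iff, norm_smul, Real.norm_of_nonneg (by positivity),
        div_mul_cancel₀ _ hny.ne']
      linarith
    have := hy _ hmem
    rw [real_inner_smul_left, real_inner_self_eq_norm_sq] at this
    rw [le_div_iff₀ hr]
    calc ‖y‖ * r = 2 * (r / 2 / ‖y‖ * ‖y‖ ^ 2) := by field_simp
      _ ≤ 2 := by linarith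
  exact Metric.isCompact_of_isClosed_isBounded (isClosed_polarSet P)
    (isBounded_iff_forall_norm_le.2 ⟨2 / r, hnorm⟩)

theorem polarSet_polarSet {P : Set (En d)} (hconv : Convex ℝ P) (hclosed : IsClosed P)
    (h0 : (0 : En d) ∈ P) : polarSet (polarSet P) = P := by
  refine Set.Subset.antisymm (fun x hx => ?_) fun x hx y hy => real_inner_comm x y ▸ hy x hx
  by_contra hxP
  obtain ⟨f, u, hfP, hfx⟩ := geometric_hahn_banach_closed_point hconv hclosed hxP
  have hu : 0 < u := by simpa using hfP 0 h0
  set w := (InnerProductSpace.toDual ℝ (En d)).symm f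
  have hw : ∀ z, ⟪z, w⟫ = f z := fun z => by
    rw [real_inner_comm]; exact InnerProductSpace.toDual_symm_apply
  have hx' := hx _ (inv_smul_mem_polarSet hu fun a ha => (hw a ▸ hfP a ha).le)
  rw [real_inner_comm, real_inner_smul_right, hw, inv_mul_le_one₀ hu] at hx'
  linarith

theorem eq_of_mem_extremePoints_polarSet {V : Finset (En d)} {e f : En d}
    (he : e ∈ (polarSet (V : Set (En d))).extremePoints ℝ)
    (hf : f ∈ polarSet (V : Set (En d))) (hactive : ∀ v ∈ V, ⟪v, e⟫ = 1 → ⟪v, f⟫ = 1) :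
    f = e := by
  -- Moving from `e` away from `f` keeps the active constraints and, for a while, the others.
  have hnear : ∀ᶠ t in 𝓝 (0 : ℝ), e + t • (e - f) ∈ polarSet (V : Set (En d)) := by
    refine (eventually_all_finset V).2 fun v hv => ?_
    by_cases hve : ⟪v, e⟫ = 1
    · refine Eventually.of_forall fun t => le_of_eq ?_
      rw [inner_add_right, inner_smul_right, inner_sub_right, hve, hactive v hv hve]
      ring
    · have hlim : Tendsto (fun t : ℝ => ⟪v, e + t • (e - f)⟫) (𝓝 0) (𝓝 ⟪v, e⟫) := by
        have : Continuous (fun t : ℝ => ⟪v, e + t • (e - f)⟫) := by fun_prop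
        simpa using this.tendsto 0
      exact (hlim.eventually (gt_mem_nhds ((he.1 v hv).lt_of_ne hve))).mono
        fun _ => le_of_lt
  obtain ⟨t, ht, hg⟩ := hnear.exists_gt
  refine he.2 hf hg ⟨t / (1 + t), 1 / (1 + t), by positivity, by positivity, ?_, ?_⟩
  · field_simp; ring
  · match_scalars <;> field_simp; ring

theorem finite_extremePoints_polarSet (V : Finset (En d)) :
    ((polarSet (V : Set (En d))).extremePoints ℝ).Finite := by
  classical
  refine Set.Finite.of_finite_image (f := fun e => V.filter (⟪·, e⟫ = 1))
    (V.powerset.finite_toSet.subset ?_) fun e he f hf hef => ?_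
  · rintro _ ⟨e, -, rfl⟩
    exact Finset.mem_coe.2 (Finset.mem_powerset.2 (Finset.filter_subset _ _))
  · have hiff : ∀ v ∈ V, ⟪v, e⟫ = 1 ↔ ⟪v, f⟫ = 1 := fun v hv => by
      simpa [hv] using Finset.ext_iff.1 hef v
    exact (eq_of_mem_extremePoints_polarSet he hf.1 fun v hv => (hiff v hv).1).symm

theorem exists_polarSet_convexHull_eq_convexHull {V : Finset (En d)}
    (hint : (0 : En d) ∈ interior (convexHull ℝ (V : Set (En d)))) :
    ∃ V' : Finset (En d), polarSet (convexHull ℝ (V : Set (En d))) = convexHull ℝ V' := by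
  have hfin := finite_extremePoints_polarSet V
  refine ⟨hfin.toFinset, ?_⟩
  have hcompact := isCompact_polarSet hint
  rw [polarSet_convexHull] at hcompact ⊢
  rw [hfin.coe_toFinset, ← (hfin.isClosed_convexHull (𝕜 := ℝ)).closure_eq,
    closure_convexHull_extremePoints hcompact (convex_polarSet _)]

def dualAffineSubspace (F : Set (En d)) : AffineSubspace ℝ (En d) where
  carrier := {y | ∀ x ∈ F, ⟪x, y⟫ = 1}
  smul_vsub_vadd_mem' t p₁ p₂ p₃ h₁ h₂ h₃ x hx := by
    simp only [vsub_eq_sub, vadd_eq_add, inner_add_right, inner_smul_right, inner_sub_right,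
      h₁ x hx, h₂ x hx, h₃ x hx]
    ring

theorem mem_intrinsicInterior_dualFace {V : Finset (En d)} {F : Set (En d)} {y : En d}
    (hy : y ∈ dualFace (convexHull ℝ (V : Set (En d))) F)
    (hlt : ∀ v ∈ V, v ∉ F → ⟪v, y⟫ < 1) :
    y ∈ intrinsicInterior ℝ (dualFace (convexHull ℝ (V : Set (En d))) F) := by
  classical
  refine mem_intrinsicInterior_of_isOpen_of_inter_subset (A := dualAffineSubspace F)
    (U := ⋂ v ∈ V.filter (· ∉ F), {z | ⟪v, z⟫ < 1}) (fun z hz => hz.2)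
    (isOpen_biInter_finset fun v _ => isOpen_lt (by fun_prop) continuous_const)
    (Set.mem_iInter₂.2 fun v hv => hlt v (Finset.mem_filter.1 hv).1 (Finset.mem_filter.1 hv).2)
    hy ?_
  rintro z ⟨hzU, hzF⟩
  refine ⟨?_, hzF⟩
  rw [polarSet_convexHull]
  intro v hv
  by_cases hvF : v ∈ F
  · exact (hzF v hvF).le
  · exact (Set.mem_iInter₂.1 hzU v (Finset.mem_filter.2 ⟨hv, hvF⟩)).le

theorem polarSet_inter_inner_eq_one {P F : Set (En d)} {q : En d}
    (hq : q ∈ intrinsicInterior ℝ F) (hFP : F ⊆ P) :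
    {y ∈ polarSet P | ⟪q, y⟫ = 1} = dualFace P F := by
  ext y
  refine ⟨fun ⟨hy, hqy⟩ => ⟨hy, fun x hx => ?_⟩, fun ⟨hy, hFy⟩ => ⟨hy, hFy q ?_⟩⟩
  · exact inner_eq_of_mem_intrinsicInterior hq (fun z hz => hy z (hFP hz)) hqy hx
  · exact intrinsicInterior_subset hq

theorem dualFace_ne_polarSet {P F : Set (En d)} (hF : F.Nonempty) :
    dualFace P F ≠ polarSet P := fun h => by
  obtain ⟨x, hx⟩ := hF
  have := ((h ▸ zero_mem_polarSet P : (0 : En d) ∈ dualFace P F)).2 x hx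
  simp at this

theorem IsExposed.exists_mem_polarSet_eq {P F : Set (En d)} (hexp : IsExposed ℝ P F)
    (hFne : F.Nonempty) (hFP : F ≠ P) (hint : (0 : En d) ∈ interior P) :
    ∃ u ∈ polarSet P, F = {x ∈ P | ⟪x, u⟫ = 1} := by
  obtain ⟨l, rfl⟩ := hexp hFne
  obtain ⟨x₀, hx₀P, hx₀⟩ := hFne
  obtain ⟨z, hzP, hz⟩ : ∃ z ∈ P, l z < l x₀ := by
    by_contra! h
    exact hFP (Set.Subset.antisymm (fun x hx => hx.1)
      fun x hx => ⟨hx, fun y hy => (hx₀ y hy).trans (h x hx)⟩)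
  have hc : 0 < l x₀ := by
    have hnear : ∀ᶠ t in 𝓝 (0 : ℝ), t • (x₀ - z) ∈ P :=
      (Continuous.tendsto' (f := fun t : ℝ => t • (x₀ - z)) (by fun_prop) 0 0
        (zero_smul ℝ _)).eventually (mem_interior_iff_mem_nhds.1 hint)
    obtain ⟨t, ht, htP⟩ := hnear.exists_gt
    have : 0 < l (t • (x₀ - z)) := by
      rw [map_smul, map_sub, smul_eq_mul]
      exact mul_pos ht (sub_pos.2 hz)
    exact this.trans_le (hx₀ _ htP)
  set w := (InnerProductSpace.toDual ℝ (En d)).symm l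
  have hw : ∀ x, ⟪x, w⟫ = l x := fun x => by
    rw [real_inner_comm]; exact InnerProductSpace.toDual_symm_apply
  refine ⟨(l x₀)⁻¹ • w, inv_smul_mem_polarSet hc fun x hx => hw x ▸ hx₀ x hx, ?_⟩
  ext x
  simp only [Set.mem_ofPred_eq, real_inner_smul_right, hw, inv_mul_eq_one₀ hc.ne']
  exact ⟨fun hx => ⟨hx.1, le_antisymm (hx.2 x₀ hx₀P) (hx₀ x hx.1)⟩,
    fun hx => ⟨hx.1, fun y hy => hx.2 ▸ hx₀ y hy⟩⟩

theorem dualFace_polarSet_dualFace {P F : Set (En d)} {u : En d}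
    (hbipolar : polarSet (polarSet P) = P) (hu : u ∈ polarSet P)
    (hF : F = {x ∈ P | ⟪x, u⟫ = 1}) :
    dualFace (polarSet P) (dualFace P F) = F := by
  have huF : u ∈ dualFace P F := ⟨hu, fun x hx => (hF ▸ hx).2⟩
  ext x
  rw [dualFace, hbipolar]
  exact ⟨fun hx => hF ▸ ⟨hx.1, real_inner_comm u x ▸ hx.2 u huF⟩,
    fun hx => ⟨(hF ▸ hx).1, fun y hy => real_inner_comm x y ▸ hy.2 x hx⟩⟩

theorem inner_le_inner_inv_smul_iff {q y : En d} (hq : q ≠ 0) :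
    ⟪y, ⟪q, q⟫⁻¹ • q⟫ ≤ ⟪⟪q, q⟫⁻¹ • q, ⟪q, q⟫⁻¹ • q⟫ ↔ ⟪q, y⟫ ≤ 1 := by
  have hc := real_inner_self_pos.2 hq
  rw [real_inner_smul_right, real_inner_smul_left, real_inner_smul_right,
    inv_mul_cancel₀ hc.ne', mul_one, inv_mul_le_iff₀ hc, mul_inv_cancel₀ hc.ne',
    real_inner_comm]

theorem inner_eq_inner_inv_smul_iff {q y : En d} (hq : q ≠ 0) :
    ⟪y, ⟪q, q⟫⁻¹ • q⟫ = ⟪⟪q, q⟫⁻¹ • q, ⟪q, q⟫⁻¹ • q⟫ ↔ ⟪q, y⟫ = 1 := by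
  have hc := real_inner_self_pos.2 hq
  rw [real_inner_smul_right, real_inner_smul_left, real_inner_smul_right,
    inv_mul_cancel₀ hc.ne', mul_one, mul_eq_left₀ (inv_ne_zero hc.ne'), real_inner_comm]

theorem HasNondegEquil.polarSet_dualFace {V : Finset (En d)} {F : Set (En d)}
    (hFP : F ≠ convexHull ℝ (V : Set (En d)))
    (h : HasNondegEquil (convexHull ℝ (V : Set (En d))) F) :
    HasNondegEquil (polarSet (convexHull ℝ (V : Set (En d))))
      (dualFace (convexHull ℝ (V : Set (En d))) F) := by
  set P := convexHull ℝ (V : Set (En d))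
  obtain ⟨q, hq, hsupp, rfl⟩ := h
  have hq0 : q ≠ 0 := by
    rintro rfl
    simp at hFP
  have hc := real_inner_self_pos.2 hq0
  have hqP : q ∈ P := (intrinsicInterior_subset hq).1
  refine ⟨⟪q, q⟫⁻¹ • q, mem_intrinsicInterior_dualFace ⟨inv_smul_mem_polarSet hc hsupp, ?_⟩ ?_,
    fun y hy => (inner_le_inner_inv_smul_iff hq0).2 (real_inner_comm q y ▸ hy q hqP), ?_⟩
  · rintro x ⟨-, hx⟩
    rw [real_inner_smul_right, hx, inv_mul_cancel₀ hc.ne']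
  · intro v hv hvF
    have hvP : v ∈ P := subset_convexHull ℝ _ hv
    have hlt : ⟪v, q⟫ < ⟪q, q⟫ := (hsupp v hvP).lt_of_ne fun h => hvF ⟨hvP, h⟩
    rwa [real_inner_smul_right, inv_mul_lt_one₀ hc]
  · simp_rw [inner_eq_inner_inv_smul_iff hq0]
    exact polarSet_inter_inner_eq_one hq fun x hx => hx.1

end Polar

/-- A `k`-face `F` of a convex `d`-polytope `P` with the origin in its interior contains
a nondegenerate equilibrium point with respect to the origin if and only if the
corresponding `(d-k-1)`-face `F*` of the polar polytope `P°` does. -/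
theorem polar_equilibrium (d k : ℕ) (hd : 0 < d) (hk : k ≤ d - 1)
    (P : Set (En d)) (hP : ∃ V : Finset (En d), P = convexHull ℝ (V : Set (En d)))
    (hint : (0 : En d) ∈ interior P)
    (F : Set (En d)) (hF : F ∈ kFacesD P k) :
    HasNondegEquil P F ↔ HasNondegEquil (polarSet P) (dualFace P F) := by
  obtain ⟨V, rfl⟩ := hP
  obtain ⟨hFexp, hFne, hFdim⟩ := hF
  have hFP : F ≠ convexHull ℝ (V : Set (En d)) := by
    rintro rfl
    rw [faceDimD_eq_of_interior_nonempty ⟨0, hint⟩] at hFdim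
    omega
  refine ⟨HasNondegEquil.polarSet_dualFace hFP, fun h => ?_⟩
  obtain ⟨V', hV'⟩ := exists_polarSet_convexHull_eq_convexHull hint
  obtain ⟨u, hu, hFu⟩ := hFexp.exists_mem_polarSet_eq hFne hFP hint
  have hbipolar := polarSet_polarSet (convex_convexHull ℝ _)
    (V.finite_toSet.isClosed_convexHull (𝕜 := ℝ)) (interior_subset hint)
  have hdual := HasNondegEquil.polarSet_dualFace (hV' ▸ dualFace_ne_polarSet hFne) (hV' ▸ h)
  rwa [← hV', hbipolar, dualFace_polarSet_dualFace hbipolar hu hFu] at hdual
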